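/- arXiv:2502.08831 — 3 statements merged into one kernel-verified Lean document; each statement's English description precedes it below -/
import Mathlib

section
/- Cauchy interlacing for a principal block: if H is an n×n Hermitian matrix and A is the m×m leading principal submatrix, then the eigenvalues λ₁ ≥ ... ≥ λ_n of H and μ₁ ≥ ... ≥ μ_m of A satisfy λ_k ≥ μ_k ≥ λ_{n−m+k} for all k = 1,...,m. -/
/-!
The span of the top `k + 1` eigenvectors of `A`, embedded isometrically into `ℂⁿ`, and the span
of the eigenvectors of `H` from the `k`-th one on have dimensions adding up to `n + 1`, so they
share a nonzero vector `x`. On `x` the Rayleigh quotient of `H` is at least `μ_k` (it is computed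
in `A`) and at most `λ_k`. The lower bound `λ_{n-m+k} ≤ μ_k` is the upper one applied to `-H`.
-/

open Matrix

/-- The `k`-th largest value of a tuple `f : Fin n → ℝ`. -/
noncomputable def descSort {n : ℕ} (f : Fin n → ℝ) : Fin n → ℝ :=
  fun k => (f ∘ Tuple.sort f) k.rev

open Module Submodule
open scoped InnerProductSpace

lemma Submodule.exists_ne_zero_mem_of_finrank_lt_add {K V : Type*} [DivisionRing K]
    [AddCommGroup V] [Module K V] [FiniteDimensional K V] {s t : Submodule K V}
    (h : finrank K V < finrank K s + finrank K t) : ∃ x ∈ s, x ∈ t ∧ x ≠ 0 := by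
  by_contra! hst
  exact h.not_ge (finrank_add_finrank_le_of_disjoint (disjoint_def.mpr hst))

namespace OrthonormalBasis

variable {𝕜 E ι : Type*} [RCLike 𝕜] [NormedAddCommGroup E] [InnerProductSpace 𝕜 E]
  [Fintype ι] {T : E →ₗ[𝕜] E} {b : OrthonormalBasis ι 𝕜 E} {d : ι → ℝ}

lemma repr_apply_of_apply_eq_smul (hb : ∀ i, T (b i) = (d i : 𝕜) • b i) (x : E) (i : ι) :
    b.repr (T x) i = d i * b.repr x i := by
  classical
  conv_lhs => rw [← b.sum_repr x]
  simp [hb, smul_smul, OrthonormalBasis.repr_self, Pi.single_apply, mul_comm]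

lemma re_inner_map_self_eq_sum (hb : ∀ i, T (b i) = (d i : 𝕜) • b i) (x : E) :
    RCLike.re ⟪x, T x⟫_𝕜 = ∑ i, d i * ‖b.repr x i‖ ^ 2 := by
  rw [← b.repr.inner_map_map, PiLp.inner_apply, map_sum]
  refine Finset.sum_congr rfl fun i _ => ?_
  rw [repr_apply_of_apply_eq_smul hb, RCLike.inner_apply, mul_assoc, RCLike.mul_conj]
  norm_cast

lemma norm_sq_eq_sum_norm_sq_repr (b : OrthonormalBasis ι 𝕜 E) (x : E) :
    ‖x‖ ^ 2 = ∑ i, ‖b.repr x i‖ ^ 2 := by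
  rw [← b.repr.norm_map, EuclideanSpace.norm_sq_eq]

lemma repr_eq_zero_of_mem_span {s : Set ι} {x : E} (hx : x ∈ span 𝕜 (b '' s)) {i : ι}
    (hi : i ∉ s) : b.repr x i = 0 := by
  rw [← b.coe_toBasis, Basis.mem_span_image] at hx
  rw [← b.coe_toBasis_repr_apply]
  exact Finsupp.notMem_support_iff.mp fun h => hi (hx h)

lemma re_inner_map_self_le_of_mem_span (hb : ∀ i, T (b i) = (d i : 𝕜) • b i) {s : Set ι}
    {c : ℝ} (hc : ∀ i ∈ s, d i ≤ c) {x : E} (hx : x ∈ span 𝕜 (b '' s)) :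
    RCLike.re ⟪x, T x⟫_𝕜 ≤ c * ‖x‖ ^ 2 := by
  rw [re_inner_map_self_eq_sum hb, b.norm_sq_eq_sum_norm_sq_repr, Finset.mul_sum]
  refine Finset.sum_le_sum fun i _ => ?_
  by_cases hi : i ∈ s
  · exact mul_le_mul_of_nonneg_right (hc i hi) (sq_nonneg _)
  · simp [repr_eq_zero_of_mem_span hx hi]

lemma le_re_inner_map_self_of_mem_span (hb : ∀ i, T (b i) = (d i : 𝕜) • b i) {s : Set ι}
    {c : ℝ} (hc : ∀ i ∈ s, c ≤ d i) {x : E} (hx : x ∈ span 𝕜 (b '' s)) :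
    c * ‖x‖ ^ 2 ≤ RCLike.re ⟪x, T x⟫_𝕜 := by
  rw [re_inner_map_self_eq_sum hb, b.norm_sq_eq_sum_norm_sq_repr, Finset.mul_sum]
  refine Finset.sum_le_sum fun i _ => ?_
  by_cases hi : i ∈ s
  · exact mul_le_mul_of_nonneg_right (hc i hi) (sq_nonneg _)
  · simp [repr_eq_zero_of_mem_span hx hi]

lemma finrank_span_image (b : OrthonormalBasis ι 𝕜 E) (s : Finset ι) :
    finrank 𝕜 (span 𝕜 (b '' s)) = s.card := by
  rw [Set.image_eq_range]
  exact (finrank_span_eq_card (b.orthonormal.linearIndependent.comp _ Subtype.coe_injective)).trans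
    (by simp)

end OrthonormalBasis

section Interlacing

variable {𝕜 E F : Type*} [RCLike 𝕜] [NormedAddCommGroup E] [InnerProductSpace 𝕜 E]
  [NormedAddCommGroup F] [InnerProductSpace 𝕜 F] {n m : ℕ}
  {V : F →ₗᵢ[𝕜] E} {T : E →ₗ[𝕜] E} {S : F →ₗ[𝕜] F}
  {b : OrthonormalBasis (Fin n) 𝕜 E} {d : Fin n → ℝ}
  {v : OrthonormalBasis (Fin m) 𝕜 F} {μ : Fin m → ℝ}

theorem compression_eigenvalue_le (hS : ∀ y, ⟪V y, T (V y)⟫_𝕜 = ⟪y, S y⟫_𝕜)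
    (hd : Antitone d) (hb : ∀ i, T (b i) = (d i : 𝕜) • b i)
    (hμ : Antitone μ) (hv : ∀ i, S (v i) = (μ i : 𝕜) • v i) (hmn : m ≤ n) (k : Fin m) :
    μ k ≤ d (Fin.castLE hmn k) := by
  have := b.toBasis.finiteDimensional_of_finite
  have hdim : finrank 𝕜 E < finrank 𝕜 (span 𝕜 (b '' ↑(Finset.Ici (Fin.castLE hmn k)))) +
      finrank 𝕜 ((span 𝕜 (v '' ↑(Finset.Iic k))).map V.toLinearMap) := by
    rw [← (equivMapOfInjective _ V.injective _).finrank_eq, b.finrank_span_image,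
      v.finrank_span_image, Fin.card_Ici, Fin.card_Iic, finrank_eq_card_basis b.toBasis,
      Fintype.card_fin, Fin.val_castLE]
    omega
  obtain ⟨_, hxT, ⟨y, hyS, rfl⟩, hy⟩ := exists_ne_zero_mem_of_finrank_lt_add hdim
  have hupper := b.re_inner_map_self_le_of_mem_span hb
    (fun i hi => hd (Finset.mem_Ici.mp hi)) hxT
  have hlower := v.le_re_inner_map_self_of_mem_span hv
    (fun i hi => hμ (Finset.mem_Iic.mp hi)) hyS
  simp only [LinearIsometry.coe_toLinearMap, hS, V.norm_map] at hupper hy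
  have hy0 : 0 < ‖y‖ ^ 2 := V.norm_map y ▸ pow_pos (norm_pos_iff.mpr hy) 2
  exact le_of_mul_le_mul_right (hlower.trans hupper) hy0

theorem eigenvalue_le_compression_eigenvalue (hS : ∀ y, ⟪V y, T (V y)⟫_𝕜 = ⟪y, S y⟫_𝕜)
    (hd : Antitone d) (hb : ∀ i, T (b i) = (d i : 𝕜) • b i)
    (hμ : Antitone μ) (hv : ∀ i, S (v i) = (μ i : 𝕜) • v i) (hmn : m ≤ n) (k : Fin m) :
    d ⟨n - m + k, by omega⟩ ≤ μ k := by
  have h := compression_eigenvalue_le (V := V) (T := -T) (S := -S) (b := b.reindex Fin.revPerm)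
    (d := fun i => -d i.rev) (v := v.reindex Fin.revPerm) (μ := fun i => -μ i.rev)
    (by simp [hS]) (fun i j hij => neg_le_neg (hd (Fin.rev_le_rev.mpr hij))) (by simp [hb])
    (fun i j hij => neg_le_neg (hμ (Fin.rev_le_rev.mpr hij))) (by simp [hv]) hmn k.rev
  have hk : (Fin.castLE hmn k.rev).rev = ⟨n - m + k, by omega⟩ := by
    ext
    simp only [Fin.val_rev, Fin.val_castLE]
    omega
  simpa [hk] using h

end Interlacing

lemma antitone_descSort {n : ℕ} (f : Fin n → ℝ) : Antitone (descSort f) :=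
  fun _ _ hij => Tuple.monotone_sort f (Fin.rev_le_rev.mpr hij)

namespace Matrix

variable {𝕜 : Type*} [RCLike 𝕜]

lemma IsHermitian.exists_orthonormalBasis_descSort {n : ℕ} {H : Matrix (Fin n) (Fin n) 𝕜}
    (hH : H.IsHermitian) : ∃ b : OrthonormalBasis (Fin n) 𝕜 (EuclideanSpace 𝕜 (Fin n)),
      ∀ k, toEuclideanLin H (b k) = (descSort hH.eigenvalues k : 𝕜) • b k := by
  refine ⟨hH.eigenvectorBasis.reindex (Fin.revPerm.trans (Tuple.sort hH.eigenvalues)).symm,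
    fun k => ?_⟩
  rw [OrthonormalBasis.reindex_apply, Equiv.symm_symm, Equiv.trans_apply, Fin.revPerm_apply]
  apply WithLp.ofLp_injective
  rw [ofLp_toLpLin, toLin'_apply, hH.mulVec_eigenvectorBasis, WithLp.ofLp_smul,
    RCLike.real_smul_eq_coe_smul (K := 𝕜)]
  rfl

variable {ι κ : Type*} [Fintype κ] [DecidableEq κ]

lemma conjTranspose_one_submatrix_mul_mul (e : ι → κ) (H : Matrix κ κ 𝕜) :
    ((1 : Matrix κ κ 𝕜).submatrix id e)ᴴ * H * (1 : Matrix κ κ 𝕜).submatrix id e =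
      H.submatrix e e := by
  ext i j
  simp [mul_apply, one_apply]

variable [Fintype ι] [DecidableEq ι]

lemma inner_toEuclideanLin_conjTranspose_mul_mul (P : Matrix κ ι 𝕜) (H : Matrix κ κ 𝕜)
    (x y : EuclideanSpace 𝕜 ι) :
    ⟪toEuclideanLin P x, toEuclideanLin H (toEuclideanLin P y)⟫_𝕜 =
      ⟪x, toEuclideanLin (Pᴴ * H * P) y⟫_𝕜 := by
  rw [toLpLin_mul_same, toLpLin_mul_same, LinearMap.comp_apply, LinearMap.comp_apply,
    toEuclideanLin_conjTranspose_eq_adjoint, LinearMap.adjoint_inner_right]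

lemma exists_linearIsometry_inner_submatrix {e : ι → κ} (he : Function.Injective e)
    (H : Matrix κ κ 𝕜) : ∃ V : EuclideanSpace 𝕜 ι →ₗᵢ[𝕜] EuclideanSpace 𝕜 κ, ∀ y,
      ⟪V y, toEuclideanLin H (V y)⟫_𝕜 = ⟪y, toEuclideanLin (H.submatrix e e) y⟫_𝕜 := by
  refine ⟨(toEuclideanLin ((1 : Matrix κ κ 𝕜).submatrix id e)).isometryOfInner fun x y => ?_,
    fun y => ?_⟩
  · have h := inner_toEuclideanLin_conjTranspose_mul_mul
      ((1 : Matrix κ κ 𝕜).submatrix id e) 1 x y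
    simpa only [conjTranspose_one_submatrix_mul_mul, submatrix_one e he, toLpLin_one,
      LinearMap.id_apply] using h
  · rw [LinearMap.coe_isometryOfInner, inner_toEuclideanLin_conjTranspose_mul_mul,
      conjTranspose_one_submatrix_mul_mul]

end Matrix

/-- Cauchy interlacing for a leading principal block: if `H` is an `n×n` Hermitian
matrix and `A` its leading `m×m` principal submatrix (`m ≤ n`), with eigenvalues
`λ₁ ≥ ... ≥ λ_n` of `H` and `μ₁ ≥ ... ≥ μ_m` of `A` listed in descending order with
multiplicity, then `λ_k ≥ μ_k ≥ λ_{n−m+k}` for all `k = 1,...,m` (0-indexed below). -/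
theorem cauchy_interlacing_leading_principal_submatrix
    (n m : ℕ) (hm : m ≤ n) (H : Matrix (Fin n) (Fin n) ℂ) (hH : H.IsHermitian)
    (A : Matrix (Fin m) (Fin m) ℂ)
    (hA : A = H.submatrix (Fin.castLE hm) (Fin.castLE hm))
    (hAH : A.IsHermitian) :
    ∀ k : Fin m,
      descSort hAH.eigenvalues k ≤
        descSort hH.eigenvalues ⟨(k : ℕ), lt_of_lt_of_le k.isLt hm⟩ ∧
      descSort hH.eigenvalues ⟨n - m + (k : ℕ), by have := k.isLt; omega⟩ ≤
        descSort hAH.eigenvalues k := by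
  intro k
  obtain ⟨b, hb⟩ := hH.exists_orthonormalBasis_descSort
  obtain ⟨v, hv⟩ := hAH.exists_orthonormalBasis_descSort
  obtain ⟨V, hV⟩ := exists_linearIsometry_inner_submatrix (Fin.castLE_injective hm) H
  rw [← hA] at hV
  have hd := antitone_descSort hH.eigenvalues
  have hμ := antitone_descSort hAH.eigenvalues
  exact ⟨compression_eigenvalue_le hV hd hb hμ hv hm k,
    eigenvalue_le_compression_eigenvalue hV hd hb hμ hv hm k⟩
end

section
/- For each integer n ≥ 1 and κT > 0 with n < κT/π + 1/2, there exists exactly one solution C of tan(CκT) = 2C/(C²−1) in the open interval ((2n−1)π/(2κT), nπ/(κT)) with 0 ≤ C < 1. -/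
/-!
Write `a = κT`. Since `2C/(C² - 1) = tan(-2 arctan C)` with `-2 arctan C ∈ (-π/2, π/2)` for
`|C| < 1`, and `Ca - nπ ∈ (-π/2, 0)` on the given interval, injectivity of `tan` on
`(-π/2, π/2)` and its `π`-periodicity turn the equation into `Ca + 2 arctan C = nπ`.
The left side is continuous and strictly increasing in `C`, lies below `nπ` at the left end
of the interval and above it at `min (nπ/a) 1`, so the intermediate value theorem gives
exactly one root.
-/

open Real Set

theorem Real.tan_eq_tan_iff_eq_add_int_mul_pi {x y : ℝ} (n : ℤ)
    (hx : x - n * π ∈ Ioo (-(π / 2)) (π / 2)) (hy : y ∈ Ioo (-(π / 2)) (π / 2)) :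
    tan x = tan y ↔ x = y + n * π := by
  rw [← tan_sub_int_mul_pi x n]
  constructor
  · intro h
    linarith [injOn_tan hx hy h]
  · rintro rfl
    rw [add_sub_cancel_right]

theorem Real.tan_neg_two_mul_arctan (C : ℝ) : tan (-(2 * arctan C)) = 2 * C / (C ^ 2 - 1) := by
  rw [tan_neg, tan_two_mul, tan_arctan, ← div_neg, neg_sub]

theorem Real.neg_two_mul_arctan_mem_Ioo {C : ℝ} (hC : C ∈ Ioo (-1) 1) :
    -(2 * arctan C) ∈ Ioo (-(π / 2)) (π / 2) := by
  have h₁ : arctan C < π / 4 := arctan_one ▸ arctan_strictMono hC.2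
  have h₀ : -(π / 4) < arctan C := by
    simpa only [arctan_neg, arctan_one] using arctan_strictMono hC.1
  constructor <;> linarith

noncomputable def lorentzianPhase (a C : ℝ) : ℝ := C * a + 2 * arctan C

theorem strictMono_lorentzianPhase {a : ℝ} (ha : 0 < a) : StrictMono (lorentzianPhase a) :=
  fun _ _ h ↦ add_lt_add (mul_lt_mul_of_pos_right h ha)
    (mul_lt_mul_of_pos_left (arctan_strictMono h) two_pos)

theorem continuous_lorentzianPhase (a : ℝ) : Continuous (lorentzianPhase a) := by
  unfold lorentzianPhase
  fun_prop

theorem tan_mul_eq_iff_lorentzianPhase_eq {a C : ℝ} (n : ℤ) (hC : C ∈ Ioo (-1) 1)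
    (hx : C * a - n * π ∈ Ioo (-(π / 2)) (π / 2)) :
    tan (C * a) = 2 * C / (C ^ 2 - 1) ↔ lorentzianPhase a C = n * π := by
  rw [← tan_neg_two_mul_arctan,
    tan_eq_tan_iff_eq_add_int_mul_pi n hx (neg_two_mul_arctan_mem_Ioo hC), lorentzianPhase]
  constructor <;> intro h <;> linarith

theorem mul_sub_mem_Ioo_of_mem_Ioo {a C ν : ℝ} (ha : 0 < a)
    (hC : C ∈ Ioo ((2 * ν - 1) * π / (2 * a)) (ν * π / a)) :
    C * a - ν * π ∈ Ioo (-(π / 2)) 0 := by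
  obtain ⟨h₁, h₂⟩ := hC
  rw [div_lt_iff₀ (by positivity)] at h₁
  rw [lt_div_iff₀ ha] at h₂
  constructor <;> linarith

theorem exists_lorentzianPhase_eq {a : ℝ} (ha : 0 < a) {n : ℕ} (hn : 1 ≤ n)
    (hupper : (n : ℝ) < a / π + 1 / 2) :
    ∃ C ∈ Ioo ((2 * (n : ℝ) - 1) * π / (2 * a)) ((n : ℝ) * π / a),
      0 < C ∧ C < 1 ∧ lorentzianPhase a C = n * π := by
  set L := (2 * (n : ℝ) - 1) * π / (2 * a)
  set R := (n : ℝ) * π / a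
  have hn1 : (1 : ℝ) ≤ n := by exact_mod_cast hn
  have hLa : L * a = n * π - π / 2 := by
    simp only [L]
    field_simp
  have hRa : R * a = n * π := div_mul_cancel₀ _ ha.ne'
  have hupper' : n * π < a + π / 2 :=
    calc n * π < (a / π + 1 / 2) * π := mul_lt_mul_of_pos_right hupper pi_pos
      _ = a + π / 2 := by field_simp
  have hL0 : 0 < L := div_pos (by nlinarith [pi_pos]) (by positivity)
  have hL1 : L < 1 := (div_lt_one (by positivity)).mpr (by linarith)
  have hLR : L < R := (mul_lt_mul_iff_left₀ ha).mp (by linarith [pi_pos])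
  have hphaseL : lorentzianPhase a L < n * π := by
    have := (neg_two_mul_arctan_mem_Ioo ⟨by linarith, hL1⟩).1
    rw [lorentzianPhase, hLa]
    linarith
  have hphaseR : n * π < lorentzianPhase a (min R 1) := by
    rcases min_cases R 1 with ⟨hmin, -⟩ | ⟨hmin, -⟩ <;> rw [hmin, lorentzianPhase]
    · linarith [arctan_pos.mpr (hL0.trans hLR)]
    · rw [arctan_one]
      linarith
  obtain ⟨C, ⟨hLC, hCR⟩, hC⟩ := intermediate_value_Ioo (le_min hLR.le hL1.le)
    (continuous_lorentzianPhase a).continuousOn ⟨hphaseL, hphaseR⟩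
  exact ⟨C, ⟨hLC, hCR.trans_le (min_le_left _ _)⟩, hL0.trans hLC,
    hCR.trans_le (min_le_right _ _), hC⟩

theorem existsUnique_tan_mul_eq {a : ℝ} (ha : 0 < a) (n : ℕ) (hn : 1 ≤ n)
    (hupper : (n : ℝ) < a / π + 1 / 2) :
    ∃! C : ℝ,
      C ∈ Ioo ((2 * (n : ℝ) - 1) * π / (2 * a)) ((n : ℝ) * π / a) ∧
      0 ≤ C ∧ C < 1 ∧ tan (C * a) = 2 * C / (C ^ 2 - 1) := by
  have hbranch {C : ℝ} (hC : C ∈ Ioo ((2 * (n : ℝ) - 1) * π / (2 * a)) ((n : ℝ) * π / a)) :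
      C * a - ((n : ℤ) : ℝ) * π ∈ Ioo (-(π / 2)) (π / 2) := by
    rw [Int.cast_natCast]
    exact Ioo_subset_Ioo_right (by positivity) (mul_sub_mem_Ioo_of_mem_Ioo ha hC)
  have hroot {C : ℝ} (hC : C ∈ Ioo ((2 * (n : ℝ) - 1) * π / (2 * a)) ((n : ℝ) * π / a))
      (hC0 : 0 ≤ C) (hC1 : C < 1) :
      tan (C * a) = 2 * C / (C ^ 2 - 1) ↔ lorentzianPhase a C = n * π := by
    exact_mod_cast tan_mul_eq_iff_lorentzianPhase_eq n ⟨by linarith, hC1⟩ (hbranch hC)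
  obtain ⟨C, hC, hC0, hC1, hphase⟩ := exists_lorentzianPhase_eq ha hn hupper
  refine ⟨C, ⟨hC, hC0.le, hC1, (hroot hC hC0.le hC1).mpr hphase⟩, ?_⟩
  rintro D ⟨hD, hD0, hD1, htan⟩
  exact (strictMono_lorentzianPhase ha).injective
    (((hroot hD hD0 hD1).mp htan).trans hphase.symm)

/-- For each integer `n ≥ 1` with `n < κT/π + 1/2` (and `κ, T > 0`), there exists
exactly one solution `C` of `tan(CκT) = 2C/(C²−1)` in the open interval
`((2n−1)π/(2κT), nπ/(κT))` satisfying `0 ≤ C < 1`. -/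
theorem lorentzian_eigenvalue_equation_unique_root
    (κ T : ℝ) (hκ : 0 < κ) (hT : 0 < T) (n : ℕ) (hn : 1 ≤ n)
    (hupper : (n : ℝ) < κ * T / π + 1 / 2) :
    ∃! C : ℝ,
      C ∈ Set.Ioo ((2 * (n : ℝ) - 1) * π / (2 * κ * T)) ((n : ℝ) * π / (κ * T)) ∧
      0 ≤ C ∧ C < 1 ∧
      Real.tan (C * κ * T) = 2 * C / (C ^ 2 - 1) := by
  simpa only [mul_assoc] using existsUnique_tan_mul_eq (mul_pos hκ hT) n hn hupper
end

section
/- For the Lorentzian transmission with η_max = 1, the number of eigenvalues λ of the windowed kernel exceeding 1/2 increases by one precisely at the times T = (2n−1)π/(2κ), n = 1, 2, ...; that is, the n-th solution C_n ∈ [0,1) of tan(CκT) = 2C/(C²−1) first exists when T > (2n−1)π/(2κ). -/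
/-!
Write `L = κT` and clear denominators: on the `n`-th branch `(2n-1)π/2 < CL < nπ` the cosine
has the sign of `(-1)ⁿ`, so `tan (CL) = 2C/(C² - 1)` amounts to `D(C) = 0` for
`D(C) = sin (CL) (C² - 1) - 2C cos (CL)`. At the left end of the branch `(-1)ⁿ D = 1 - C² > 0`,
while at `min (nπ/L) 1` it is negative (`-2C` at `CL = nπ`, and `-2(-1)ⁿ cos L` at `C = 1`), so the
intermediate value theorem produces a root in `[0, 1)` exactly when the branch starts below
`C = 1`, i.e. when `(2n-1)π/2 < κT`.
-/

open Real Set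

noncomputable def lorentzianSecular (L C : ℝ) : ℝ :=
  sin (C * L) * (C ^ 2 - 1) - 2 * C * cos (C * L)

lemma neg_one_pow_mul_cos_pos {n : ℕ} {x : ℝ}
    (h₁ : (2 * (n : ℝ) - 1) * π / 2 < x) (h₂ : x < n * π) :
    0 < (-1) ^ n * cos x := by
  rw [← cos_nat_mul_pi_sub]
  apply cos_pos_of_mem_Ioo
  constructor <;> linarith

lemma tan_eq_iff_lorentzianSecular_eq_zero {L C : ℝ} (hcos : cos (C * L) ≠ 0)
    (hC : C ^ 2 - 1 ≠ 0) :
    tan (C * L) = 2 * C / (C ^ 2 - 1) ↔ lorentzianSecular L C = 0 := by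
  rw [tan_eq_sin_div_cos, div_eq_div_iff hcos hC, lorentzianSecular, sub_eq_zero]

lemma two_mul_sub_one_mul_pi_pos {n : ℕ} (hn : 1 ≤ n) : 0 < (2 * (n : ℝ) - 1) * π := by
  have : (1 : ℝ) ≤ n := by exact_mod_cast hn
  exact mul_pos (by linarith) pi_pos

lemma neg_one_pow_mul_self {R : Type*} [Monoid R] [HasDistribNeg R] (n : ℕ) :
    (-1 : R) ^ n * (-1) ^ n = 1 := by
  rw [← pow_add, ← two_mul, pow_mul, neg_one_sq, one_pow]

lemma neg_one_pow_mul_lorentzianSecular_of_mul_eq_sub_pi_div_two {n : ℕ} {L C : ℝ}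
    (h : C * L = n * π - π / 2) :
    (-1) ^ n * lorentzianSecular L C = 1 - C ^ 2 := by
  rw [lorentzianSecular, h, sin_nat_mul_pi_sub, cos_nat_mul_pi_sub, sin_pi_div_two,
    cos_pi_div_two]
  linear_combination (1 - C ^ 2) * neg_one_pow_mul_self (R := ℝ) n

lemma neg_one_pow_mul_lorentzianSecular_of_mul_eq_nat_mul_pi {n : ℕ} {L C : ℝ}
    (h : C * L = n * π) :
    (-1) ^ n * lorentzianSecular L C = -2 * C := by
  rw [lorentzianSecular, h, sin_nat_mul_pi, cos_nat_mul_pi]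
  linear_combination (-2 * C) * neg_one_pow_mul_self (R := ℝ) n

lemma lorentzianSecular_one (L : ℝ) : lorentzianSecular L 1 = -2 * cos L := by
  simp [lorentzianSecular]

lemma continuous_lorentzianSecular (L : ℝ) : Continuous (lorentzianSecular L) := by
  unfold lorentzianSecular; fun_prop

lemma exists_lorentzianSecular_eq_zero {n : ℕ} (hn : 1 ≤ n) {L : ℝ}
    (hL : (2 * (n : ℝ) - 1) * π / 2 < L) :
    ∃ C ∈ Ioo ((2 * (n : ℝ) - 1) * π / (2 * L)) (min (n * π / L) 1),
      lorentzianSecular L C = 0 := by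
  have hp := two_mul_sub_one_mul_pi_pos hn
  have hL0 : 0 < L := lt_trans (by positivity) hL
  set a := (2 * (n : ℝ) - 1) * π / (2 * L) with ha_def
  set b := n * π / L with hb_def
  have ha0 : 0 < a := by positivity
  have ha1 : a < 1 := by rw [div_lt_one (by positivity)]; linarith
  have hab : a < b := by
    rw [div_lt_div_iff₀ (by positivity) hL0]; nlinarith [pi_pos]
  have haL : a * L = n * π - π / 2 := by rw [ha_def]; field_simp
  have hbL : b * L = n * π := by rw [hb_def]; field_simp
  have hleft : 0 < (-1) ^ n * lorentzianSecular L a := by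
    rw [neg_one_pow_mul_lorentzianSecular_of_mul_eq_sub_pi_div_two haL]; nlinarith
  have hright : (-1) ^ n * lorentzianSecular L (min b 1) < 0 := by
    rcases le_or_gt b 1 with hb1 | hb1
    · rw [min_eq_left hb1, neg_one_pow_mul_lorentzianSecular_of_mul_eq_nat_mul_pi hbL]
      linarith
    · rw [min_eq_right hb1.le, lorentzianSecular_one]
      have := neg_one_pow_mul_cos_pos hL ((one_lt_div hL0).mp hb1)
      linarith
  obtain ⟨C, hC, hD⟩ := intermediate_value_Ioo' (lt_min hab ha1).le
    ((continuous_const.mul (continuous_lorentzianSecular L)).continuousOn) ⟨hright, hleft⟩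
  exact ⟨C, hC, neg_one_pow_mul_eq_zero_iff.mp hD⟩

lemma exists_lorentzian_channel_iff {n : ℕ} (hn : 1 ≤ n) {L : ℝ} (hL : 0 < L) :
    (∃ C : ℝ, C ∈ Ico (0 : ℝ) 1 ∧ C ∈ Ioo ((2 * (n : ℝ) - 1) * π / (2 * L)) (n * π / L) ∧
        tan (C * L) = 2 * C / (C ^ 2 - 1)) ↔ (2 * (n : ℝ) - 1) * π / 2 < L := by
  constructor
  · rintro ⟨C, ⟨-, hC1⟩, ⟨hCa, -⟩, -⟩
    have := hCa.trans hC1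
    rw [div_lt_one (by positivity)] at this
    linarith
  · intro hlt
    obtain ⟨C, ⟨hCa, hCe⟩, hD⟩ := exists_lorentzianSecular_eq_zero hn hlt
    have hCb : C < n * π / L := hCe.trans_le (min_le_left _ _)
    have hC1 : C < 1 := hCe.trans_le (min_le_right _ _)
    have hp := two_mul_sub_one_mul_pi_pos hn
    have hC0 : 0 < C := lt_trans (by positivity) hCa
    have hCL₁ : (2 * (n : ℝ) - 1) * π / 2 < C * L := by
      rw [div_lt_iff₀ (by positivity)] at hCa; linarith
    have hCL₂ : C * L < n * π := (lt_div_iff₀ hL).mp hCb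
    have hcos : cos (C * L) ≠ 0 := right_ne_zero_of_mul (neg_one_pow_mul_cos_pos hCL₁ hCL₂).ne'
    refine ⟨C, ⟨hC0.le, hC1⟩, ⟨hCa, hCb⟩, ?_⟩
    exact (tan_eq_iff_lorentzianSecular_eq_zero hcos (by nlinarith)).mpr hD

/-- For the lossless Lorentzian transmission, the `n`-th quantum channel (the `n`-th
solution `C_n ∈ [0,1)` of `tan(CκT) = 2C/(C²−1)`, lying in the interval
`((2n−1)π/(2κT), nπ/(κT))`) first exists precisely when `T > (2n−1)π/(2κ)`. -/
theorem lorentzian_channel_opening_time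
    (κ T : ℝ) (hκ : 0 < κ) (hT : 0 < T) (n : ℕ) (hn : 1 ≤ n) :
    (∃ C : ℝ,
        C ∈ Set.Ico (0 : ℝ) 1 ∧
        C ∈ Set.Ioo ((2 * (n : ℝ) - 1) * π / (2 * κ * T)) ((n : ℝ) * π / (κ * T)) ∧
        Real.tan (C * κ * T) = 2 * C / (C ^ 2 - 1)) ↔
      (2 * (n : ℝ) - 1) * π / (2 * κ) < T := by
  simp_rw [mul_assoc _ κ T]
  rw [exists_lorentzian_channel_iff hn (mul_pos hκ hT), div_lt_iff₀ two_pos,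
    div_lt_iff₀ (by positivity)]
  constructor <;> intro h <;> linarith
end
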